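/- arXiv:1802.06077 — 3 statements merged into one kernel-verified Lean document; each statement's English description precedes it below -/
import Mathlib

section
/- Let c, ς be real numbers with c > 0 and ς > 0, and set θ = 2c² - ς²/2 and γ = c⁴ + c²ς²/2 + ς⁴/16. Then every complex root z of the quartic z⁴ - θ z² + γ has |Im z| = ς/2. -/
open Complex

/-! With `w = c + (ς/2) i` one has `θ = w² + w̄²` and `γ = (w w̄)²`, so the quartic factors as
`(z² - w²)(z² - w̄²)`; its roots are `±w, ±w̄`, each with imaginary part `±ς/2`. -/

theorem abs_im_eq_of_sq_sub_sq_mul_sq_sub_conj_sq {w z : ℂ}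
    (h : (z ^ 2 - w ^ 2) * (z ^ 2 - (starRingEnd ℂ w) ^ 2) = 0) : |z.im| = |w.im| := by
  rcases mul_eq_zero.mp h with h | h <;>
    rcases sq_eq_sq_iff_eq_or_eq_neg.mp (sub_eq_zero.mp h) with rfl | rfl <;> simp

theorem quartic_roots_im_general (c ς : ℝ) (hς : 0 < ς) (z : ℂ)
    (hz : z ^ 4 - (2 * (c : ℂ) ^ 2 - (ς : ℂ) ^ 2 / 2) * z ^ 2 +
      ((c : ℂ) ^ 4 + (c : ℂ) ^ 2 * (ς : ℂ) ^ 2 / 2 + (ς : ℂ) ^ 4 / 16) = 0) :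
    |z.im| = ς / 2 := by
  set w : ℂ := c + ς / 2 * I
  have hw : starRingEnd ℂ w = c - ς / 2 * I := by simp [w, map_ofNat, sub_eq_add_neg]
  have hfactor : (z ^ 2 - w ^ 2) * (z ^ 2 - (starRingEnd ℂ w) ^ 2) = 0 := by
    rw [hw]
    linear_combination hz -
      (ς : ℂ) ^ 2 / 4 * (2 * z ^ 2 + 2 * (c : ℂ) ^ 2 + (ς : ℂ) ^ 2 / 4 * (1 - I ^ 2)) * I_sq
  rw [abs_im_eq_of_sq_sub_sq_mul_sq_sub_conj_sq hfactor]
  simpa [w] using abs_of_pos (half_pos hς)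

theorem quartic_roots_im (c ς : ℝ) (hc : 0 < c) (hς : 0 < ς) (z : ℂ)
    (hz : z ^ 4 - (2 * (c : ℂ) ^ 2 - (ς : ℂ) ^ 2 / 2) * z ^ 2 +
      ((c : ℂ) ^ 4 + (c : ℂ) ^ 2 * (ς : ℂ) ^ 2 / 2 + (ς : ℂ) ^ 4 / 16) = 0) :
    |z.im| = ς / 2 :=
  quartic_roots_im_general c ς hς z hz
end

section
/- The plasma dispersion function satisfies 𝒵(z) = i√π w(z) for all z with Im z > 0, where 𝒵(z) = (1/√π) ∫_{-∞}^{∞} e^{-t²}/(t - z) dt and w is the Faddeeva function. -/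
open Complex MeasureTheory Set Filter

lemma sqrt_pi_cpow : ((Real.pi : ℂ)) ^ (1/2 : ℂ) = ((Real.sqrt Real.pi : ℝ) : ℂ) := by
  rw [Real.sqrt_eq_rpow, Complex.ofReal_cpow Real.pi_pos.le]
  norm_num

lemma integral_cexp_neg_mul_Ioi {a : ℂ} (ha : 0 < a.re) :
    ∫ s in Ioi (0:ℝ), Complex.exp (-(a * s)) = 1 / a := by
  have hne : a ≠ 0 := fun h => by simp [h] at ha
  have hint : IntegrableOn (fun s : ℝ => Complex.exp (-(a * s))) (Ioi 0) := by
    refine Integrable.mono' (exp_neg_integrableOn_Ioi 0 ha)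
      (Continuous.aestronglyMeasurable (by fun_prop)) ?_
    refine ae_restrict_of_forall_mem measurableSet_Ioi fun s _ => ?_
    rw [Complex.norm_exp]
    simp
  have hd : ∀ x ∈ Ici (0:ℝ), HasDerivAt (fun s : ℝ => -(Complex.exp (-(a * s)) / a))
      (Complex.exp (-(a * x))) x := by
    intro x _
    have h1 : HasDerivAt (fun s : ℝ => -(a * (s:ℂ))) (-a) x := by
      simpa using (((hasDerivAt_id (x:ℂ)).const_mul a).neg).comp_ofReal
    have h2 := (h1.cexp.div_const a).fun_neg
    refine h2.congr_deriv ?_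
    field_simp
  have ht : Tendsto (fun s : ℝ => -(Complex.exp (-(a * s)) / a)) atTop (nhds 0) := by
    apply squeeze_zero_norm (a := fun s : ℝ => Real.exp (-(a.re * s)) / ‖a‖)
    · intro s
      rw [norm_neg, norm_div, Complex.norm_exp]
      simp
    · have h3 : Tendsto (fun s : ℝ => a.re * s) atTop atTop :=
        Tendsto.const_mul_atTop ha tendsto_id
      simpa using (Real.tendsto_exp_neg_atTop_nhds_zero.comp h3).div_const (‖a‖)
  rw [integral_Ioi_of_hasDerivAt_of_tendsto' hd hint ht]
  simp

lemma integrable_cexp_shift (c : ℂ) :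
    Integrable (fun u : ℝ => Complex.exp (-((u:ℂ) - c)^2)) := by
  have h := integrable_cexp_quadratic (b := 1) (by simp) (2*c) (-c^2)
  exact h.congr (Filter.Eventually.of_forall fun u => by simp only []; congr 1; ring)

lemma integrable_shift_deriv (c : ℂ) :
    Integrable (fun u : ℝ => 2*((u:ℂ) - c) * Complex.exp (-((u:ℂ) - c)^2)) := by
  have h1 : Integrable (fun x : ℝ => |x| * Real.exp (-x^2)) := by
    have := (integrable_rpow_mul_exp_neg_mul_sq (b := 1) one_pos (s := 1) (by norm_num)).abs
    refine this.congr (Filter.Eventually.of_forall fun x => ?_)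
    simp only []
    rw [Real.rpow_one, neg_one_mul, abs_mul, _root_.abs_of_nonneg (Real.exp_pos _).le]
  have h2 : Integrable (fun x : ℝ => Real.exp (-x^2)) := by
    simpa using integrable_exp_neg_mul_sq (b := 1) one_pos
  have hg : Integrable (fun u : ℝ =>
      2 * Real.exp (c.im^2) * ((|u - c.re| + |c.im|) * Real.exp (-(u - c.re)^2))) := by
    refine Integrable.const_mul ?_ _
    have := (h1.add (h2.const_mul |c.im|)).comp_sub_right c.re
    refine this.congr (Filter.Eventually.of_forall fun u => ?_)
    simp only [Function.comp, Pi.add_apply]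
    ring
  refine hg.mono' (Continuous.aestronglyMeasurable (by fun_prop))
    (Filter.Eventually.of_forall fun u => ?_)
  have hre : (-((u:ℂ) - c)^2).re = c.im^2 - (u - c.re)^2 := by
    simp only [Complex.neg_re, pow_two, Complex.mul_re, Complex.sub_re, Complex.sub_im,
      Complex.ofReal_re, Complex.ofReal_im]
    ring
  simp only [norm_mul, Complex.norm_exp, Complex.norm_two, hre]
  have habs : ‖(u:ℂ) - c‖ ≤ |u - c.re| + |c.im| := by
    have := Complex.norm_le_abs_re_add_abs_im ((u:ℂ) - c)
    simpa using this
  have hexp : Real.exp (c.im^2 - (u - c.re)^2) = Real.exp (c.im^2) * Real.exp (-(u - c.re)^2) := by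
    rw [← Real.exp_add]; ring_nf
  rw [hexp]
  have h0 : (0:ℝ) ≤ Real.exp (c.im^2) * Real.exp (-(u - c.re)^2) := by positivity
  calc 2 * ‖(u:ℂ) - c‖ * (Real.exp (c.im^2) * Real.exp (-(u - c.re)^2))
      ≤ 2 * (|u - c.re| + |c.im|) * (Real.exp (c.im^2) * Real.exp (-(u - c.re)^2)) := by
        gcongr
    _ = 2 * Real.exp (c.im^2) * ((|u - c.re| + |c.im|) * Real.exp (-(u - c.re)^2)) := by ring

lemma integral_gauss_shift_Ioi (c : ℂ) :
    ∫ u in Ioi (0:ℝ), 2*((u:ℂ) - c) * Complex.exp (-((u:ℂ) - c)^2) = Complex.exp (-c^2) := by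
  have hd : ∀ x ∈ Ici (0:ℝ), HasDerivAt (fun u : ℝ => -Complex.exp (-((u:ℂ) - c)^2))
      (2*((x:ℂ) - c) * Complex.exp (-((x:ℂ) - c)^2)) x := by
    intro x _
    have h1 : HasDerivAt (fun u : ℝ => -(((u:ℂ) - c)^2)) (-(2*((x:ℂ) - c))) x := by
      have := (((hasDerivAt_id (x:ℂ)).sub_const c).pow 2).neg.comp_ofReal
      simpa [mul_comm] using this
    have h2 := h1.cexp.fun_neg
    refine h2.congr_deriv ?_
    ring
  have ht : Tendsto (fun u : ℝ => -Complex.exp (-((u:ℂ) - c)^2)) atTop (nhds 0) := by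
    apply squeeze_zero_norm (a := fun u : ℝ => Real.exp (c.im^2 - (u - c.re)^2))
    · intro u
      rw [norm_neg, Complex.norm_exp]
      have hre : (-((u:ℂ) - c)^2).re = c.im^2 - (u - c.re)^2 := by
        simp only [Complex.neg_re, pow_two, Complex.mul_re, Complex.sub_re, Complex.sub_im,
          Complex.ofReal_re, Complex.ofReal_im]
        ring
      rw [hre]
    · have hsq : Tendsto (fun u : ℝ => (u - c.re)^2) atTop atTop :=
        (tendsto_pow_atTop two_ne_zero).comp (tendsto_atTop_add_const_right _ _ tendsto_id)
      have hneg : Tendsto (fun u : ℝ => -(u - c.re)^2) atTop atBot :=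
        tendsto_neg_atBot_iff.mpr hsq
      have hbot : Tendsto (fun u : ℝ => c.im^2 - (u - c.re)^2) atTop atBot := by
        simpa [sub_eq_add_neg] using tendsto_atBot_add_const_left atTop (c.im^2) hneg
      simpa using hbot
  rw [integral_Ioi_of_hasDerivAt_of_tendsto' hd (integrable_shift_deriv c).integrableOn ht]
  simp

lemma ftc_s (z : ℂ) (u : ℝ) :
    Complex.exp (-((u:ℂ) - I*z)^2) - Complex.exp (-(u:ℂ)^2)
      = ∫ s in (0:ℝ)..1, (2*I*z*((u:ℂ) - I*(s:ℂ)*z)) * Complex.exp (-((u:ℂ) - I*(s:ℂ)*z)^2) := by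
  have hd : ∀ s ∈ Set.uIcc (0:ℝ) 1, HasDerivAt (fun s : ℝ => Complex.exp (-((u:ℂ) - I*(s:ℂ)*z)^2))
      ((2*I*z*((u:ℂ) - I*(s:ℂ)*z)) * Complex.exp (-((u:ℂ) - I*(s:ℂ)*z)^2)) s := by
    intro s _
    have h1 : HasDerivAt (fun s : ℝ => -(((u:ℂ) - I*(s:ℂ)*z)^2)) (2*I*z*((u:ℂ) - I*(s:ℂ)*z)) s := by
      have hin : HasDerivAt (fun w : ℂ => (u:ℂ) - I*w*z) (-(I*z)) (s:ℂ) := by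
        simpa using (((hasDerivAt_id ((s:ℝ):ℂ)).const_mul I).mul_const z).const_sub (u:ℂ)
      have := ((hin.pow 2).neg).comp_ofReal
      convert this using 1
      simp
      ring
    have := h1.cexp
    convert this using 1
    ring
  have hint : IntervalIntegrable
      (fun s : ℝ => (2*I*z*((u:ℂ) - I*(s:ℂ)*z)) * Complex.exp (-((u:ℂ) - I*(s:ℂ)*z)^2))
      MeasureTheory.volume 0 1 := (Continuous.intervalIntegrable (by fun_prop) _ _)
  have := intervalIntegral.integral_eq_sub_of_hasDerivAt hd hint
  rw [this]
  norm_num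

lemma integral_gauss_shifted (z : ℂ) (hz : 0 < z.im) :
    ∫ u in Ioi (0:ℝ), Complex.exp (-((u:ℂ) - I*z)^2)
      = ((Real.sqrt Real.pi / 2 : ℝ) : ℂ) + I * ∫ s in (0:ℝ)..1, z * Complex.exp (((s:ℂ)*z)^2) := by
  have int1 : IntegrableOn (fun u : ℝ => Complex.exp (-((u:ℂ) - I*z)^2)) (Ioi 0) :=
    (integrable_cexp_shift (I*z)).integrableOn
  have int0 : IntegrableOn (fun u : ℝ => Complex.exp (-(u:ℂ)^2)) (Ioi 0) := by
    simpa using (integrable_cexp_shift 0).integrableOn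
  have hS : ∫ u in Ioi (0:ℝ), Complex.exp (-(u:ℂ)^2) = ((Real.sqrt Real.pi / 2 : ℝ) : ℂ) := by
    have h := integral_gaussian_complex_Ioi (b := 1) (by simp)
    simp only [one_mul, neg_mul] at h
    rw [h, div_one, sqrt_pi_cpow]
    push_cast
    ring
  set H : ℝ → ℝ → ℂ := fun u s => (2*I*z*((u:ℂ) - I*(s:ℂ)*z)) * Complex.exp (-((u:ℂ) - I*(s:ℂ)*z)^2)
    with hH
  have hprod : Integrable (Function.uncurry H)
      ((volume.restrict (Ioi (0:ℝ))).prod (volume.restrict (Ioc (0:ℝ) 1))) := by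
    have h1 : Integrable (fun x : ℝ => |x| * Real.exp (-x^2)) := by
      have := (integrable_rpow_mul_exp_neg_mul_sq (b := 1) one_pos (s := 1) (by norm_num)).abs
      refine this.congr (Filter.Eventually.of_forall fun x => ?_)
      simp only []
      rw [Real.rpow_one, neg_one_mul, abs_mul, _root_.abs_of_nonneg (Real.exp_pos _).le]
    have h2 : Integrable (fun x : ℝ => Real.exp (-x^2)) := by
      simpa using integrable_exp_neg_mul_sq (b := 1) one_pos
    set C : ℝ := 2 * ‖z‖ * (1 + 2*‖z‖) * Real.exp (‖z‖^2) with hC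
    have hgint : Integrable (fun p : ℝ × ℝ => (C * ((|p.1| + 1) * Real.exp (-p.1^2))) * (1:ℝ))
        ((volume.restrict (Ioi (0:ℝ))).prod (volume.restrict (Ioc (0:ℝ) 1))) := by
      refine Integrable.mul_prod (f := fun x : ℝ => C * ((|x|+1) * Real.exp (-x^2)))
        (g := fun _ : ℝ => (1:ℝ)) ?_ ?_
      · exact (((h1.add h2).const_mul C).congr
          (Filter.Eventually.of_forall fun x => by simp only [Pi.add_apply]; ring)).integrableOn
      · exact (integrableOn_const measure_Ioc_lt_top.ne)
    refine hgint.mono' (Continuous.aestronglyMeasurable (by fun_prop)) ?_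
    rw [Measure.prod_restrict]
    refine ae_restrict_of_forall_mem (measurableSet_Ioi.prod measurableSet_Ioc) fun p hp => ?_
    obtain ⟨hu, hs⟩ := hp
    have hu0 : 0 < p.1 := hu
    obtain ⟨hs0, hs1⟩ := hs
    set u := p.1
    set s := p.2
    have hre : (-((u:ℂ) - I*(s:ℂ)*z)^2).re = (s*z.re)^2 - (u + s*z.im)^2 := by
      simp only [Complex.neg_re, pow_two, Complex.mul_re, Complex.mul_im, Complex.sub_re,
        Complex.sub_im, Complex.ofReal_re, Complex.ofReal_im, Complex.I_re, Complex.I_im]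
      ring
    have habs2 : ‖(u:ℂ) - I*(s:ℂ)*z‖ ≤ |u| + 2*‖z‖ := by
      calc ‖(u:ℂ) - I*(s:ℂ)*z‖ ≤ ‖(u:ℂ)‖ + ‖I*(s:ℂ)*z‖ :=
            norm_sub_le _ _
        _ = |u| + |s| * ‖z‖ := by simp [map_mul]
        _ ≤ |u| + 2*‖z‖ := by
            have : |s| ≤ 2 := by rw [abs_le]; constructor <;> linarith
            have := mul_le_mul_of_nonneg_right this (norm_nonneg z)
            linarith
    have hexp2 : Real.exp ((-((u:ℂ) - I*(s:ℂ)*z)^2).re) ≤ Real.exp (‖z‖^2) * Real.exp (-u^2) := by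
      rw [hre, ← Real.exp_add]
      apply Real.exp_le_exp.mpr
      have e1 : (s*z.re)^2 ≤ ‖z‖^2 := by
        have h1 : |s * z.re| ≤ |z.re| := by
          rw [abs_mul]
          have : |s| ≤ 1 := by rw [abs_le]; constructor <;> linarith
          calc |s| * |z.re| ≤ 1 * |z.re| := by
                apply mul_le_mul_of_nonneg_right this (abs_nonneg _)
            _ = |z.re| := one_mul _
        have h2 : |z.re| ≤ ‖z‖ := Complex.abs_re_le_norm z
        calc (s*z.re)^2 = |s*z.re|^2 := (_root_.sq_abs _).symm
          _ ≤ ‖z‖^2 := by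
              apply pow_le_pow_left₀ (abs_nonneg _) (h1.trans h2)
      have e2 : u^2 ≤ (u + s*z.im)^2 := by
        have h3 : 0 ≤ s * z.im := mul_nonneg hs0.le hz.le
        nlinarith
      linarith
    rw [Function.uncurry_apply_pair, hH]
    simp only []
    rw [norm_mul, Complex.norm_exp]
    have : ‖2*I*z*((u:ℂ) - I*(s:ℂ)*z)‖ = 2 * ‖z‖ * ‖(u:ℂ) - I*(s:ℂ)*z‖ := by
      simp [map_mul]
    rw [this]
    have hb1 : 2 * ‖z‖ * ‖(u:ℂ) - I*(s:ℂ)*z‖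
        ≤ 2 * ‖z‖ * (|u| + 2*‖z‖) := by
      apply mul_le_mul_of_nonneg_left habs2 (by positivity)
    calc 2 * ‖z‖ * ‖(u:ℂ) - I*(s:ℂ)*z‖ * Real.exp ((-((u:ℂ) - I*(s:ℂ)*z)^2).re)
        ≤ (2 * ‖z‖ * (|u| + 2*‖z‖)) * (Real.exp (‖z‖^2) * Real.exp (-u^2)) := by
          apply mul_le_mul hb1 hexp2 (Real.exp_pos _).le (by positivity)
      _ ≤ (C * ((|u| + 1) * Real.exp (-u^2))) * (1:ℝ) := by
          rw [mul_one, hC]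
          have : 2 * ‖z‖ * (|u| + 2*‖z‖)
              ≤ 2 * ‖z‖ * (1 + 2*‖z‖) * (|u| + 1) := by
            nlinarith [norm_nonneg z, abs_nonneg u]
          calc 2 * ‖z‖ * (|u| + 2*‖z‖) * (Real.exp (‖z‖^2) * Real.exp (-u^2))
              ≤ 2 * ‖z‖ * (1 + 2*‖z‖) * (|u| + 1) * (Real.exp (‖z‖^2) * Real.exp (-u^2)) := by
                apply mul_le_mul_of_nonneg_right this (by positivity)
            _ = 2 * ‖z‖ * (1 + 2*‖z‖) * Real.exp (‖z‖^2) * ((|u| + 1) * Real.exp (-u^2)) := by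
                ring
      _ ≤ (C * ((|u| + 1) * Real.exp (-u^2))) * (1:ℝ) := le_refl _
  have hdiff : (∫ u in Ioi (0:ℝ), Complex.exp (-((u:ℂ) - I*z)^2)) - ((Real.sqrt Real.pi / 2 : ℝ) : ℂ)
      = ∫ u in Ioi (0:ℝ), ∫ s in Ioc (0:ℝ) 1, H u s := by
    rw [← hS, ← integral_sub int1 int0]
    refine integral_congr_ae (Filter.Eventually.of_forall fun u => ?_)
    simp only []
    rw [ftc_s z u, intervalIntegral.integral_of_le zero_le_one]
  have hswap : ∫ u in Ioi (0:ℝ), ∫ s in Ioc (0:ℝ) 1, H u s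
      = ∫ s in Ioc (0:ℝ) 1, ∫ u in Ioi (0:ℝ), H u s := integral_integral_swap hprod
  have hinner : ∀ s : ℝ, ∫ u in Ioi (0:ℝ), H u s = I * (z * Complex.exp (((s:ℂ)*z)^2)) := by
    intro s
    have heq : ∀ u : ℝ, H u s = (I*z) * (2*((u:ℂ) - I*(s:ℂ)*z) * Complex.exp (-((u:ℂ) - I*(s:ℂ)*z)^2)) := by
      intro u; rw [hH]; ring
    simp only [heq]
    rw [MeasureTheory.integral_const_mul, integral_gauss_shift_Ioi (I*(s:ℂ)*z)]
    rw [show -(I*(s:ℂ)*z)^2 = ((s:ℂ)*z)^2 from by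
      rw [show (I*(s:ℂ)*z)^2 = I^2 * ((s:ℂ)*z)^2 from by ring, Complex.I_sq]; ring]
    ring
  have : (∫ u in Ioi (0:ℝ), Complex.exp (-((u:ℂ) - I*z)^2)) - ((Real.sqrt Real.pi / 2 : ℝ) : ℂ)
      = I * ∫ s in (0:ℝ)..1, z * Complex.exp (((s:ℂ)*z)^2) := by
    rw [hdiff, hswap]
    rw [intervalIntegral.integral_of_le zero_le_one]
    rw [show (∫ s in Ioc (0:ℝ) 1, ∫ u in Ioi (0:ℝ), H u s)
        = ∫ s in Ioc (0:ℝ) 1, I * (z * Complex.exp (((s:ℂ)*z)^2)) from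
      integral_congr_ae (Filter.Eventually.of_forall fun s => hinner s)]
    rw [MeasureTheory.integral_const_mul]
  linear_combination this

noncomputable def w (z : ℂ) : ℂ :=
  Complex.exp (-z ^ 2) *
    (1 + (2 * Complex.I / (Real.sqrt Real.pi : ℂ)) *
      ∫ t in (0:ℝ)..1, z * Complex.exp ((t * z) ^ 2))

theorem plasma_dispersion (z : ℂ) (hz : 0 < z.im) :
    (1 / (Real.sqrt Real.pi : ℂ)) * ∫ t : ℝ, Complex.exp (-(t : ℂ) ^ 2) / ((t : ℂ) - z) =
      Complex.I * (Real.sqrt Real.pi : ℂ) * w z := by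
  have hsπ : (0:ℝ) < Real.sqrt Real.pi := Real.sqrt_pos.mpr Real.pi_pos
  have hsπ' : ((Real.sqrt Real.pi : ℝ) : ℂ) ≠ 0 := by exact_mod_cast hsπ.ne'
  set G : ℝ → ℝ → ℂ :=
    fun t s => I * Complex.exp (-(t:ℂ)^2) * Complex.exp (-(I*((t:ℂ) - z) * s)) with hG
  have step1 : ∀ t : ℝ, Complex.exp (-(t:ℂ)^2) / ((t:ℂ) - z) = ∫ s in Ioi (0:ℝ), G t s := by
    intro t
    have ha : (I*((t:ℂ) - z)).re = z.im := by simp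
    have hne : (t:ℂ) - z ≠ 0 := by
      intro h
      rw [sub_eq_zero] at h
      have h2 : ((t:ℂ)).im = z.im := by rw [h]
      simp at h2
      linarith
    have hI := integral_cexp_neg_mul_Ioi (a := I*((t:ℂ)-z)) (by rw [ha]; exact hz)
    have : ∫ s in Ioi (0:ℝ), G t s
        = (I * Complex.exp (-(t:ℂ)^2)) * (1 / (I*((t:ℂ)-z))) := by
      rw [hG]
      simp only []
      rw [MeasureTheory.integral_const_mul, hI]
    rw [this]
    field_simp
  have hGint : Integrable (Function.uncurry G) (volume.prod (volume.restrict (Ioi (0:ℝ)))) := by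
    have h2 : Integrable (fun x : ℝ => Real.exp (-x^2)) := by
      simpa using integrable_exp_neg_mul_sq (b := 1) one_pos
    have hgint := h2.mul_prod (exp_neg_integrableOn_Ioi 0 hz)
    refine hgint.mono' (Continuous.aestronglyMeasurable (by fun_prop)) ?_
    refine Filter.Eventually.of_forall fun p => ?_
    rw [Function.uncurry_apply_pair, hG]
    simp only []
    rw [norm_mul, norm_mul,
      Complex.norm_I, Complex.norm_exp, Complex.norm_exp]
    have e1 : (-((p.1:ℝ):ℂ)^2).re = -(p.1:ℝ)^2 := by
      simp only [Complex.neg_re, pow_two, Complex.mul_re, Complex.ofReal_re, Complex.ofReal_im]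
      ring
    have e2 : (-(I*(((p.1:ℝ):ℂ) - z) * ((p.2:ℝ):ℂ))).re = -z.im * p.2 := by
      simp only [Complex.neg_re, Complex.mul_re, Complex.mul_im, Complex.I_re, Complex.I_im,
        Complex.sub_re, Complex.sub_im, Complex.ofReal_re, Complex.ofReal_im]
      ring
    rw [e1, e2]
    rw [one_mul]
  have hswap : ∫ t : ℝ, ∫ s in Ioi (0:ℝ), G t s = ∫ s in Ioi (0:ℝ), ∫ t : ℝ, G t s :=
    integral_integral_swap hGint
  have step4 : ∀ s : ℝ, (∫ t : ℝ, G t s)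
      = (I * ((Real.sqrt Real.pi : ℝ):ℂ)) * Complex.exp (I*z*(s:ℂ) - (s:ℂ)^2/4) := by
    intro s
    have h1 : ∀ t : ℝ, G t s = I * Complex.exp ((-1:ℂ)*(t:ℂ)^2 + (-(I*(s:ℂ)))*(t:ℂ) + I*z*(s:ℂ)) := by
      intro t
      rw [hG]
      simp only []
      rw [mul_assoc, ← Complex.exp_add]
      congr 2
      ring
    simp only [h1]
    rw [MeasureTheory.integral_const_mul,
      integral_cexp_quadratic (by norm_num : ((-1:ℂ)).re < 0) (-(I*(s:ℂ))) (I*z*(s:ℂ))]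
    rw [show ((Real.pi:ℂ) / -(-1:ℂ)) = (Real.pi:ℂ) from by norm_num, sqrt_pi_cpow]
    rw [show I*z*(s:ℂ) - (-(I*(s:ℂ)))^2/(4*(-1:ℂ)) = I*z*(s:ℂ) - (s:ℂ)^2/4 from by
      linear_combination ((s:ℂ)^2/4) * Complex.I_sq]
    ring
  have hcv : ∫ s in Ioi (0:ℝ), Complex.exp (-((s:ℂ)/2 - I*z)^2)
      = 2 * ∫ u in Ioi (0:ℝ), Complex.exp (-((u:ℂ) - I*z)^2) := by
    have h := integral_comp_mul_left_Ioi (fun x : ℝ => Complex.exp (-((x:ℂ) - I*z)^2)) 0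
      (by norm_num : (0:ℝ) < 1/2)
    simp only [mul_zero] at h
    calc ∫ s in Ioi (0:ℝ), Complex.exp (-((s:ℂ)/2 - I*z)^2)
        = ∫ s in Ioi (0:ℝ), (fun x : ℝ => Complex.exp (-((x:ℂ) - I*z)^2)) ((1/2)*s) := by
          refine integral_congr_ae (Filter.Eventually.of_forall fun s => ?_)
          simp only []
          congr 2
          push_cast
          ring
      _ = ((1/2:ℝ))⁻¹ • ∫ x in Ioi ((0:ℝ)), Complex.exp (-((x:ℂ) - I*z)^2) := h
      _ = 2 * ∫ u in Ioi (0:ℝ), Complex.exp (-((u:ℂ) - I*z)^2) := by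
          rw [show ((1/2:ℝ))⁻¹ = (2:ℝ) from by norm_num, Complex.real_smul]
          norm_num
  have main : ∫ t : ℝ, Complex.exp (-(t:ℂ)^2) / ((t:ℂ) - z)
      = (I * ((Real.sqrt Real.pi : ℝ):ℂ)) *
        ((2 * (((Real.sqrt Real.pi / 2 : ℝ):ℂ)
          + I * ∫ s in (0:ℝ)..1, z * Complex.exp (((s:ℂ)*z)^2))) * Complex.exp (-z^2)) := by
    calc ∫ t : ℝ, Complex.exp (-(t:ℂ)^2) / ((t:ℂ) - z)
        = ∫ t : ℝ, ∫ s in Ioi (0:ℝ), G t s :=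
          integral_congr_ae (Filter.Eventually.of_forall step1)
      _ = ∫ s in Ioi (0:ℝ), ∫ t : ℝ, G t s := hswap
      _ = ∫ s in Ioi (0:ℝ), (I * ((Real.sqrt Real.pi : ℝ):ℂ)) * Complex.exp (I*z*(s:ℂ) - (s:ℂ)^2/4) :=
          integral_congr_ae (Filter.Eventually.of_forall step4)
      _ = (I * ((Real.sqrt Real.pi : ℝ):ℂ)) * ∫ s in Ioi (0:ℝ), Complex.exp (I*z*(s:ℂ) - (s:ℂ)^2/4) :=
          MeasureTheory.integral_const_mul _ _
      _ = (I * ((Real.sqrt Real.pi : ℝ):ℂ)) *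
          ∫ s in Ioi (0:ℝ), Complex.exp (-((s:ℂ)/2 - I*z)^2) * Complex.exp (-z^2) := by
          congr 1
          refine integral_congr_ae (Filter.Eventually.of_forall fun s => ?_)
          simp only []
          rw [← Complex.exp_add]
          congr 1
          linear_combination z^2 * Complex.I_sq
      _ = (I * ((Real.sqrt Real.pi : ℝ):ℂ)) *
          ((∫ s in Ioi (0:ℝ), Complex.exp (-((s:ℂ)/2 - I*z)^2)) * Complex.exp (-z^2)) := by
          rw [MeasureTheory.integral_mul_const]
      _ = (I * ((Real.sqrt Real.pi : ℝ):ℂ)) *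
          ((2 * ∫ u in Ioi (0:ℝ), Complex.exp (-((u:ℂ) - I*z)^2)) * Complex.exp (-z^2)) := by
          rw [hcv]
      _ = _ := by rw [integral_gauss_shifted z hz]
  rw [main]
  unfold w
  push_cast
  set J := ∫ s in (0:ℝ)..1, z * Complex.exp (((s:ℂ)*z)^2) with hJ
  field_simp
end

section
/- For Im z > 0, the Faddeeva function admits the integral representation w(z) = (i/π) ∫_{-∞}^{∞} e^{-t²}/(z - t) dt. -/
open Complex MeasureTheory Real Set

lemma norm_cexp (w : ℂ) : ‖Complex.exp w‖ = Real.exp w.re := Complex.norm_exp w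


lemma hasDerivAt_cexp_lin (c : ℂ) (s : ℝ) :
    HasDerivAt (fun s : ℝ => Complex.exp (c * s)) (c * Complex.exp (c * s)) s := by
  have h1 : HasDerivAt (fun s : ℝ => c * (s:ℂ)) c s := by
    simpa using (hasDerivAt_id s).ofReal_comp.const_mul c
  simpa [mul_comm] using h1.cexp

lemma exp_int (c : ℂ) (hc : 0 < c.im) :
    ∫ s in Ioi (0:ℝ), Complex.exp (I * c * s) = I / c := by
  have hc0 : c ≠ 0 := by intro h; simp [h] at hc
  have hIc : I * c ≠ 0 := mul_ne_zero I_ne_zero hc0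
  have hnorm : ∀ s : ℝ, ‖Complex.exp (I * c * s)‖ = Real.exp (-c.im * s) := by
    intro s; rw [norm_cexp]; congr 1; simp [mul_assoc]
  have key : ∫ s in Ioi (0:ℝ), Complex.exp (I * c * s) =
      0 - Complex.exp (I * c * 0) / (I * c) := by
    apply integral_Ioi_of_hasDerivAt_of_tendsto'
      (f := fun s : ℝ => Complex.exp (I * c * s) / (I * c))
    · intro s _
      have := (hasDerivAt_cexp_lin (I * c) s).div_const (I * c)
      rwa [mul_div_cancel_left₀ _ hIc] at this
    · apply Integrable.mono' (g := fun s : ℝ => Real.exp (-c.im * s))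
        ((exp_neg_integrableOn_Ioi 0 hc))
      · exact (Continuous.aestronglyMeasurable (by continuity)).restrict
      · filter_upwards with s; rw [hnorm]
    · rw [show (0:ℂ) = 0 / (I * c) by simp]
      apply Filter.Tendsto.div_const
      apply squeeze_zero_norm (fun s => (hnorm s).le)
      simpa using Real.tendsto_exp_comp_nhds_zero.mpr
        (Filter.Tendsto.const_mul_atTop_of_neg (neg_neg_iff_pos.mpr hc) Filter.tendsto_id)
  rw [key]
  field_simp
  rw [Complex.I_sq, zero_mul, zero_mul, Complex.exp_zero]
  ring


lemma norm_int1 (z : ℂ) (t s : ℝ) :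
    ‖Complex.exp (-(t:ℂ)^2 + I * (z - t) * s)‖ = Real.exp (-t^2) * Real.exp (-z.im * s) := by
  rw [norm_cexp, ← Real.exp_add]
  congr 1
  simp [Complex.add_re, Complex.mul_re, Complex.sub_re, Complex.sub_im, ← Complex.ofReal_pow]

lemma int_prod1 (z : ℂ) (hz : 0 < z.im) :
    Integrable (Function.uncurry fun (t s : ℝ) => Complex.exp (-(t:ℂ)^2 + I * (z - t) * s))
      (volume.prod (volume.restrict (Ioi 0))) := by
  apply Integrable.mono' (g := fun p : ℝ × ℝ => Real.exp (-p.1^2) * Real.exp (-z.im * p.2))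
  · exact Integrable.mul_prod (by simpa using integrable_exp_neg_mul_sq (one_pos))
      (exp_neg_integrableOn_Ioi 0 hz)
  · apply Continuous.aestronglyMeasurable
    fun_prop
  · filter_upwards with p
    rw [Function.uncurry, norm_int1]

lemma fourier_step (z : ℂ) (s : ℝ) :
    ∫ t : ℝ, Complex.exp (-(t:ℂ)^2 + I * (z - t) * s)
      = (Real.sqrt Real.pi : ℂ) * Complex.exp (I * z * s - s^2/4) := by
  have h1 : ∀ t : ℝ, Complex.exp (-(t:ℂ)^2 + I * (z - t) * s)
      = Complex.exp (I * z * s) * (Complex.exp (I * (-s:ℂ) * t) * Complex.exp (-1 * (t:ℂ)^2)) := by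
    intro t
    rw [← Complex.exp_add, ← Complex.exp_add]
    congr 1; push_cast; ring
  simp_rw [h1]
  rw [MeasureTheory.integral_const_mul, fourierIntegral_gaussian (by norm_num) (-s:ℂ)]
  have h2 : ((Real.pi : ℂ) / 1) ^ (1/2 : ℂ) = (Real.sqrt Real.pi : ℂ) := by
    rw [div_one, Real.sqrt_eq_rpow, show (1/2:ℂ)=((1/2:ℝ):ℂ) by norm_num,
      ← Complex.ofReal_cpow Real.pi_pos.le]
  rw [h2, mul_left_comm]
  congr 1
  rw [← Complex.exp_add]
  congr 1
  push_cast
  ring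


lemma norm_g (z : ℂ) (u s : ℝ) :
    ‖Complex.exp (-((u:ℂ) - I*((s:ℂ)*z))^2)‖
      = Real.exp (-((u + s*z.im)^2 - (s*z.re)^2)) := by
  rw [norm_cexp]
  congr 1
  simp [pow_two, Complex.sub_re, Complex.mul_re, Complex.mul_im, Complex.sub_im]

lemma norm_g_le (z : ℂ) (hz : 0 ≤ z.im) {u s : ℝ} (hu : 0 ≤ u) (hs : s ∈ Icc (0:ℝ) 1) :
    ‖Complex.exp (-((u:ℂ) - I*((s:ℂ)*z))^2)‖ ≤ Real.exp (z.re^2) * Real.exp (-u^2) := by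
  rw [norm_g, ← Real.exp_add]
  apply Real.exp_le_exp.2
  obtain ⟨hs0, hs1⟩ := hs
  nlinarith [mul_nonneg (mul_nonneg hu hs0) hz, sq_nonneg (s*z.im),
    mul_nonneg (mul_nonneg (sub_nonneg.2 hs1) (by linarith : (0:ℝ) ≤ 1+s)) (sq_nonneg z.re)]

lemma hasDerivAt_g_u (c : ℂ) (u : ℝ) :
    HasDerivAt (fun u : ℝ => Complex.exp (-((u:ℂ) - c)^2))
      (-2*((u:ℂ) - c) * Complex.exp (-((u:ℂ) - c)^2)) u := by
  have h1 : HasDerivAt (fun u : ℝ => ((u:ℂ) - c)) 1 u := by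
    simpa using (hasDerivAt_id u).ofReal_comp.sub_const c
  have h2 := ((h1.mul h1).neg).cexp
  convert h2 using 1
  · funext v; simp only [Pi.neg_apply, Pi.mul_apply]; rw [pow_two]
  · simp only [Pi.neg_apply, Pi.mul_apply]; rw [pow_two]; ring

lemma hasDerivAt_g_s (z : ℂ) (u s : ℝ) :
    HasDerivAt (fun s : ℝ => Complex.exp (-((u:ℂ) - I*((s:ℂ)*z))^2))
      (2*I*z*((u:ℂ) - I*((s:ℂ)*z)) * Complex.exp (-((u:ℂ) - I*((s:ℂ)*z))^2)) s := by
  have h1 : HasDerivAt (fun s : ℝ => ((u:ℂ) - I*((s:ℂ)*z))) (-(I*z)) s := by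
    have h0 : HasDerivAt (fun s : ℝ => I*((s:ℂ)*z)) (I*z) s := by
      have := ((hasDerivAt_id s).ofReal_comp.mul_const z).const_mul I
      simpa using this
    simpa using h0.const_sub (u:ℂ)
  have h2 := ((h1.mul h1).neg).cexp
  convert h2 using 1
  · funext v; simp only [Pi.neg_apply, Pi.mul_apply]; rw [pow_two]
  · simp only [Pi.neg_apply, Pi.mul_apply]; rw [pow_two]; ring

lemma int_bound (z : ℂ) :
    IntegrableOn (fun u : ℝ => 2*(u + ‖z‖) * (Real.exp (z.re^2) * Real.exp (-u^2))) (Ioi 0) := by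
  have f1 : IntegrableOn (fun u : ℝ => u * Real.exp (-u^2)) (Ioi 0) := by
    apply (integrableOn_rpow_mul_exp_neg_mul_sq one_pos (by norm_num : (-1:ℝ) < 1)).congr_fun
      ?_ measurableSet_Ioi
    intro x hx
    simp [Real.rpow_one]
  have f2 : IntegrableOn (fun u : ℝ => Real.exp (-u^2)) (Ioi 0) := by
    have := integrable_exp_neg_mul_sq (b := 1) one_pos
    simpa using this.integrableOn
  refine IntegrableOn.congr_fun
    (((f1.add (f2.const_mul ‖z‖)).const_mul (2 * Real.exp (z.re^2)))) ?_ measurableSet_Ioi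
  intro x hx
  simp only [Pi.add_apply]
  ring

lemma int_deriv_u (z : ℂ) (hz : 0 < z.im) {s : ℝ} (hs : s ∈ Icc (0:ℝ) 1) :
    IntegrableOn (fun u : ℝ =>
      (-2*((u:ℂ) - I*((s:ℂ)*z)) * Complex.exp (-((u:ℂ) - I*((s:ℂ)*z))^2))) (Ioi 0) := by
  apply Integrable.mono'
    (g := fun u : ℝ => 2*(u + ‖z‖) * (Real.exp (z.re^2) * Real.exp (-u^2))) (int_bound z)
  · exact (Continuous.aestronglyMeasurable (by fun_prop)).restrict
  · rw [MeasureTheory.ae_restrict_iff' measurableSet_Ioi]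
    filter_upwards with u hu
    have hu' : (0:ℝ) < u := hu
    rw [norm_mul, norm_mul]
    have hb := norm_g_le z hz.le hu'.le hs
    have h1 : ‖(-2 : ℂ)‖ = 2 := by simp
    have h2 : ‖(u:ℂ) - I*((s:ℂ)*z)‖ ≤ u + ‖z‖ := by
      refine (norm_sub_le _ _).trans ?_
      gcongr
      · simp [Complex.norm_real, _root_.abs_of_nonneg hu'.le]
      · have hn : ‖I*((s:ℂ)*z)‖ = s * ‖z‖ := by
          simp [Complex.norm_real, Real.norm_eq_abs, _root_.abs_of_nonneg hs.1]
        rw [hn]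
        nlinarith [hs.1, hs.2, norm_nonneg z]
    rw [h1]
    calc 2 * ‖(u:ℂ) - I*((s:ℂ)*z)‖ * ‖Complex.exp (-((u:ℂ) - I*((s:ℂ)*z))^2)‖
        ≤ 2 * (u + ‖z‖) * (Real.exp (z.re^2) * Real.exp (-u^2)) := by
          apply mul_le_mul _ hb (norm_nonneg _)
          · nlinarith [norm_nonneg z]
          · nlinarith [norm_nonneg ((u:ℂ) - I*((s:ℂ)*z)), h2, norm_nonneg z]

lemma int_g (z : ℂ) (hz : 0 < z.im) {s : ℝ} (hs : s ∈ Icc (0:ℝ) 1) :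
    IntegrableOn (fun u : ℝ => Complex.exp (-((u:ℂ) - I*((s:ℂ)*z))^2)) (Ioi 0) := by
  apply Integrable.mono'
    (g := fun u : ℝ => Real.exp (z.re^2) * Real.exp (-u^2))
  · have h0 := integrable_exp_neg_mul_sq (b := 1) one_pos
    have h1 : IntegrableOn (fun u : ℝ => Real.exp (-u^2)) (Ioi 0) := by
      simpa using h0.integrableOn
    exact h1.const_mul _
  · exact (Continuous.aestronglyMeasurable (by fun_prop)).restrict
  · rw [MeasureTheory.ae_restrict_iff' measurableSet_Ioi]
    filter_upwards with u hu
    exact norm_g_le z hz.le (le_of_lt hu) hs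

-- FTC on Ioi 0 for fixed s
lemma ftc_Ioi (z : ℂ) (hz : 0 < z.im) {s : ℝ} (hs : s ∈ Icc (0:ℝ) 1) :
    ∫ u in Ioi (0:ℝ), (-2*((u:ℂ) - I*((s:ℂ)*z)) * Complex.exp (-((u:ℂ) - I*((s:ℂ)*z))^2))
      = - Complex.exp (((s:ℂ)*z)^2) := by
  have key : ∫ u in Ioi (0:ℝ),
      (-2*((u:ℂ) - I*((s:ℂ)*z)) * Complex.exp (-((u:ℂ) - I*((s:ℂ)*z))^2))
      = 0 - Complex.exp (-(((0:ℝ):ℂ) - I*((s:ℂ)*z))^2) := by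
    apply integral_Ioi_of_hasDerivAt_of_tendsto'
      (f := fun u : ℝ => Complex.exp (-((u:ℂ) - I*((s:ℂ)*z))^2))
    · intro u _
      exact hasDerivAt_g_u (I*((s:ℂ)*z)) u
    · exact int_deriv_u z hz hs
    · apply squeeze_zero_norm' (a := fun u : ℝ => Real.exp (z.re^2) * Real.exp (-u^2))
      · filter_upwards [Filter.eventually_ge_atTop (0:ℝ)] with u hu
        exact norm_g_le z hz.le hu hs
      · rw [show (0:ℝ) = Real.exp (z.re^2) * 0 by ring]
        apply Filter.Tendsto.const_mul
        apply Real.tendsto_exp_comp_nhds_zero.mpr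
        apply Filter.tendsto_neg_atBot_iff.mpr
        exact Filter.tendsto_pow_atTop (by norm_num)
  rw [key]
  congr 1
  rw [zero_sub, neg_inj]
  congr 1
  rw [show ((0:ℝ):ℂ) - I*((s:ℂ)*z) = -(I*((s:ℂ)*z)) by push_cast; ring, neg_sq, mul_pow,
    Complex.I_sq]
  ring

lemma ftc01 (z : ℂ) (u : ℝ) :
    Complex.exp (-((u:ℂ) - I*z)^2) - Complex.exp (-(u:ℂ)^2)
      = ∫ s in (0:ℝ)..1,
          2*I*z*((u:ℂ) - I*((s:ℂ)*z)) * Complex.exp (-((u:ℂ) - I*((s:ℂ)*z))^2) := by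
  have key := intervalIntegral.integral_eq_sub_of_hasDerivAt
    (f := fun s : ℝ => Complex.exp (-((u:ℂ) - I*((s:ℂ)*z))^2))
    (f' := fun s : ℝ => 2*I*z*((u:ℂ) - I*((s:ℂ)*z)) * Complex.exp (-((u:ℂ) - I*((s:ℂ)*z))^2))
    (fun s _ => hasDerivAt_g_s z u s)
    ((Continuous.intervalIntegrable (by fun_prop) 0 1))
  rw [key]
  norm_num

lemma norm_deriv_le (z : ℂ) (hz : 0 ≤ z.im) {u s : ℝ} (hu : 0 ≤ u) (hs : s ∈ Icc (0:ℝ) 1) :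
    ‖2*I*z*((u:ℂ) - I*((s:ℂ)*z)) * Complex.exp (-((u:ℂ) - I*((s:ℂ)*z))^2)‖
      ≤ ‖z‖ * (2*(u + ‖z‖) * (Real.exp (z.re^2) * Real.exp (-u^2))) := by
  have hb := norm_g_le z hz hu hs
  have h2 : ‖(u:ℂ) - I*((s:ℂ)*z)‖ ≤ u + ‖z‖ := by
    refine (norm_sub_le _ _).trans ?_
    gcongr
    · simp [Complex.norm_real, _root_.abs_of_nonneg hu]
    · have hn : ‖I*((s:ℂ)*z)‖ = s * ‖z‖ := by
        simp [Complex.norm_real, Real.norm_eq_abs, _root_.abs_of_nonneg hs.1]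
      rw [hn]
      nlinarith [hs.1, hs.2, norm_nonneg z]
  have h3 : ‖(2*I*z : ℂ)‖ = 2 * ‖z‖ := by simp
  rw [norm_mul, norm_mul, h3]
  calc 2 * ‖z‖ * ‖(u:ℂ) - I*((s:ℂ)*z)‖ * ‖Complex.exp (-((u:ℂ) - I*((s:ℂ)*z))^2)‖
      ≤ 2 * ‖z‖ * (u + ‖z‖) * (Real.exp (z.re^2) * Real.exp (-u^2)) := by
        apply mul_le_mul _ hb (norm_nonneg _)
        · positivity
        · nlinarith [norm_nonneg z, h2, norm_nonneg ((u:ℂ) - I*((s:ℂ)*z))]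
    _ = _ := by ring

lemma swap2 (z : ℂ) (hz : 0 < z.im) :
    ∫ u in Ioi (0:ℝ), ∫ s in Ioc (0:ℝ) 1,
        (2*I*z*((u:ℂ) - I*((s:ℂ)*z)) * Complex.exp (-((u:ℂ) - I*((s:ℂ)*z))^2))
      = ∫ s in Ioc (0:ℝ) 1, ∫ u in Ioi (0:ℝ),
        (2*I*z*((u:ℂ) - I*((s:ℂ)*z)) * Complex.exp (-((u:ℂ) - I*((s:ℂ)*z))^2)) := by
  apply MeasureTheory.integral_integral_swap
  apply Integrable.mono'
    (g := fun p : ℝ × ℝ =>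
      (‖z‖ * (2*(p.1 + ‖z‖) * (Real.exp (z.re^2) * Real.exp (-p.1^2)))) * (1:ℝ))
  · exact Integrable.mul_prod (((int_bound z).const_mul ‖z‖))
      (integrableOn_const (by simp [Real.volume_Ioc]))
  · apply Continuous.aestronglyMeasurable
    rw [Function.uncurry_def]
    fun_prop
  · rw [Measure.prod_restrict, MeasureTheory.ae_restrict_iff'
      (measurableSet_Ioi.prod measurableSet_Ioc)]
    filter_upwards with p hp
    obtain ⟨hp1, hp2⟩ := hp
    rw [Function.uncurry, mul_one]
    exact norm_deriv_le z hz.le (le_of_lt hp1) ⟨le_of_lt hp2.1, hp2.2⟩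

lemma F_eval (z : ℂ) (hz : 0 < z.im) :
    ∫ u in Ioi (0:ℝ), Complex.exp (-((u:ℂ) - I*z)^2)
      = (Real.sqrt Real.pi : ℂ)/2
        + I * ∫ s in (0:ℝ)..1, z * Complex.exp (((s:ℂ)*z)^2) := by
  have hI1 : IntegrableOn (fun u : ℝ => Complex.exp (-((u:ℂ) - I*z)^2)) (Ioi 0) := by
    have := int_g z hz (s := 1) ⟨zero_le_one, le_refl 1⟩
    simpa using this
  have hI0 : IntegrableOn (fun u : ℝ => Complex.exp (-(u:ℂ)^2)) (Ioi 0) := by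
    have := int_g z hz (s := 0) ⟨le_refl 0, zero_le_one⟩
    simpa using this
  have hG0 : ∫ u in Ioi (0:ℝ), Complex.exp (-(u:ℂ)^2) = (Real.sqrt Real.pi : ℂ)/2 := by
    have h := integral_gaussian_complex_Ioi (b := 1) (by norm_num)
    have h2 : ((Real.pi : ℂ) / 1) ^ (1/2 : ℂ) = (Real.sqrt Real.pi : ℂ) := by
      rw [div_one, Real.sqrt_eq_rpow, show (1/2:ℂ)=((1/2:ℝ):ℂ) by norm_num,
        ← Complex.ofReal_cpow Real.pi_pos.le]
    rw [← h2]
    simpa using h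
  have hsub : (∫ u in Ioi (0:ℝ), Complex.exp (-((u:ℂ) - I*z)^2))
      - ∫ u in Ioi (0:ℝ), Complex.exp (-(u:ℂ)^2)
      = ∫ u in Ioi (0:ℝ),
          (Complex.exp (-((u:ℂ) - I*z)^2) - Complex.exp (-(u:ℂ)^2)) :=
    (MeasureTheory.integral_sub hI1 hI0).symm
  have hptwise : ∫ u in Ioi (0:ℝ),
      (Complex.exp (-((u:ℂ) - I*z)^2) - Complex.exp (-(u:ℂ)^2))
      = ∫ u in Ioi (0:ℝ), ∫ s in Ioc (0:ℝ) 1,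
          (2*I*z*((u:ℂ) - I*((s:ℂ)*z)) * Complex.exp (-((u:ℂ) - I*((s:ℂ)*z))^2)) := by
    apply setIntegral_congr_fun measurableSet_Ioi
    intro u _
    dsimp only
    rw [ftc01 z u, intervalIntegral.integral_of_le zero_le_one]
  have hinner : ∀ s ∈ Ioc (0:ℝ) 1,
      (∫ u in Ioi (0:ℝ),
        (2*I*z*((u:ℂ) - I*((s:ℂ)*z)) * Complex.exp (-((u:ℂ) - I*((s:ℂ)*z))^2)))
      = I * (z * Complex.exp (((s:ℂ)*z)^2)) := by
    intro s hs
    have heq : ∀ u : ℝ, 2*I*z*((u:ℂ) - I*((s:ℂ)*z)) * Complex.exp (-((u:ℂ) - I*((s:ℂ)*z))^2)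
        = (-(I*z)) * (-2*((u:ℂ) - I*((s:ℂ)*z)) * Complex.exp (-((u:ℂ) - I*((s:ℂ)*z))^2)) := by
      intro u; ring
    simp_rw [heq]
    rw [MeasureTheory.integral_const_mul, ftc_Ioi z hz ⟨le_of_lt hs.1, hs.2⟩]
    ring
  have hfin : ∫ s in Ioc (0:ℝ) 1, ∫ u in Ioi (0:ℝ),
      (2*I*z*((u:ℂ) - I*((s:ℂ)*z)) * Complex.exp (-((u:ℂ) - I*((s:ℂ)*z))^2))
      = I * ∫ s in (0:ℝ)..1, z * Complex.exp (((s:ℂ)*z)^2) := by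
    rw [setIntegral_congr_fun measurableSet_Ioc hinner,
      intervalIntegral.integral_of_le zero_le_one, MeasureTheory.integral_const_mul]
  have := hsub.trans (hptwise.trans ((swap2 z hz).trans hfin))
  rw [hG0] at this
  linear_combination this


lemma sq_step (z : ℂ) (s : ℝ) :
    Complex.exp (I*z*s - (s:ℂ)^2/4)
      = Complex.exp (-z^2) * Complex.exp (-((s:ℂ)/2 - I*z)^2) := by
  rw [← Complex.exp_add]
  congr 1
  ring_nf
  rw [Complex.I_sq]
  ring

lemma scale (z : ℂ) :
    ∫ s in Ioi (0:ℝ), Complex.exp (-((s:ℂ)/2 - I*z)^2)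
      = 2 * ∫ u in Ioi (0:ℝ), Complex.exp (-((u:ℂ) - I*z)^2) := by
  have h := integral_comp_mul_left_Ioi (fun u : ℝ => Complex.exp (-((u:ℂ) - I*z)^2)) 0
    (b := (1/2:ℝ)) (by norm_num)
  simp only [mul_zero] at h
  rw [show ((1/2:ℝ))⁻¹ = (2:ℝ) by norm_num] at h
  have h2 : ∫ s in Ioi (0:ℝ), Complex.exp (-((s:ℂ)/2 - I*z)^2)
      = ∫ s in Ioi (0:ℝ), Complex.exp (-(((1/2*s : ℝ):ℂ) - I*z)^2) := by
    apply setIntegral_congr_fun measurableSet_Ioi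
    intro s _
    push_cast
    ring_nf
  rw [h2, h, Complex.real_smul]
  norm_num

theorem faddeeva_integral_repr (z : ℂ) (hz : 0 < z.im) :
    w z = (Complex.I / (Real.pi : ℂ)) * ∫ t : ℝ, Complex.exp (-(t : ℂ) ^ 2) / (z - (t : ℂ)) := by
  have him : ∀ t : ℝ, 0 < (z - (t:ℂ)).im := by
    intro t
    simpa [Complex.sub_im] using hz
  have hrep : ∀ t : ℝ, Complex.exp (-(t:ℂ)^2) / (z - t)
      = -I * ∫ s in Ioi (0:ℝ), Complex.exp (-(t:ℂ)^2 + I * (z - t) * s) := by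
    intro t
    have hzt : z - (t:ℂ) ≠ 0 := by
      intro h
      simpa [h] using him t
    have h1 : ∀ s : ℝ, Complex.exp (-(t:ℂ)^2 + I * (z - t) * s)
        = Complex.exp (-(t:ℂ)^2) * Complex.exp (I * (z - t) * s) := by
      intro s; rw [← Complex.exp_add]
    simp_rw [h1]
    rw [MeasureTheory.integral_const_mul, exp_int (z - t) (him t)]
    rw [show (-I) * (Complex.exp (-(t:ℂ)^2) * (I/(z - t)))
        = Complex.exp (-(t:ℂ)^2) * ((-(I*I))/(z - t)) by ring, Complex.I_mul_I]
    rw [neg_neg, mul_one_div]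
  have step1 : (∫ t : ℝ, Complex.exp (-(t:ℂ)^2) / (z - t))
      = -I * ∫ t : ℝ, ∫ s in Ioi (0:ℝ), Complex.exp (-(t:ℂ)^2 + I * (z - t) * s) := by
    simp_rw [hrep]
    rw [MeasureTheory.integral_const_mul]
  have step2 : (∫ t : ℝ, ∫ s in Ioi (0:ℝ), Complex.exp (-(t:ℂ)^2 + I * (z - t) * s))
      = ∫ s in Ioi (0:ℝ), ∫ t : ℝ, Complex.exp (-(t:ℂ)^2 + I * (z - t) * s) :=
    MeasureTheory.integral_integral_swap (int_prod1 z hz)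
  have step3 : (∫ s in Ioi (0:ℝ), ∫ t : ℝ, Complex.exp (-(t:ℂ)^2 + I * (z - t) * s))
      = (Real.sqrt Real.pi : ℂ) * ∫ s in Ioi (0:ℝ), Complex.exp (I * z * s - (s:ℂ)^2/4) := by
    simp_rw [fourier_step z]
    rw [MeasureTheory.integral_const_mul]
  have step4 : (∫ s in Ioi (0:ℝ), Complex.exp (I * z * s - (s:ℂ)^2/4))
      = Complex.exp (-z^2) * (2 * ∫ u in Ioi (0:ℝ), Complex.exp (-((u:ℂ) - I*z)^2)) := by
    simp_rw [sq_step z]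
    rw [MeasureTheory.integral_const_mul, scale z]
  have hF := F_eval z hz
  have hE : (∫ s in (0:ℝ)..1, z * Complex.exp (((s:ℂ)*z)^2))
      = ∫ t in (0:ℝ)..1, z * Complex.exp (((t:ℂ) * z) ^ 2) := rfl
  rw [step1, step2, step3, step4, hF]
  rw [w]
  have hpi0 : (Real.sqrt Real.pi : ℂ) ≠ 0 := by
    simp [Real.sqrt_eq_zero', Real.pi_pos.le, Real.pi_pos.ne', not_le, Real.pi_pos]
  have hsq : (Real.sqrt Real.pi : ℂ) * (Real.sqrt Real.pi : ℂ) = (Real.pi : ℂ) := by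
    rw [← Complex.ofReal_mul, Real.mul_self_sqrt Real.pi_pos.le]
  have hpi : (Real.pi : ℂ) ≠ 0 := by
    rw [← hsq]; exact mul_ne_zero hpi0 hpi0
  simp_rw [intervalIntegral.integral_const_mul]
  have hEE : ∀ x : ℝ, ((x:ℂ)*z)^2 = z^2*(x:ℂ)^2 := fun x => by ring
  simp_rw [hEE]
  rw [← hsq]
  field_simp
  ring_nf
  rw [show (I:ℂ)^3 = -I by rw [pow_succ, Complex.I_sq]; ring]
  rw [Complex.I_sq]
  ring
end
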